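/- Suppose F is nonempty and O = {J_n} consists of a single open-shop job with processing time q_n satisfying p_max < q_n and P(F) > q_n. Then there exists a feasible schedule π with makespan(π) ≤ 2·q_n + P(F); consequently makespan(π) ≤ (4/3)·makespan(σ) for every feasible schedule σ. -/

import Mathlib

/-!
The flow-shop jobs are processed back to back on every machine, the block on `M(i+1)` shifted
by `q_n` against the block on `M(i)`; since `p_max ≤ q_n` this respects the flow order. The open
job fills the gaps `[0, q_n]` on `M2` and `[q_n, 2 q_n]` on `M3`, and runs on `M1` from
`q_n + P(F)`, after both the flow block and (as `q_n ≤ P(F)`) its own slot on `M3`. So the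
makespan is at most `2 q_n + P(F)`. Conversely every feasible schedule has makespan `M ≥ 3 q_n`
(the three operations of `J_n` are disjoint) and `M ≥ q_n + P(F)` (the load of `M3`), whence
`2 q_n + P(F) ≤ M / 3 + M`.
-/

open Finset

noncomputable section

/-- Processing time of a job: `p` on flow-shop jobs, `q` otherwise. -/
def jobTime {J : Type*} [DecidableEq J] (F : Finset J) (p q : J → ℝ) (j : J) : ℝ :=
  if j ∈ F then p j else q j

/-- Feasibility of a schedule given by start times `S j i` of job `j` on machine `i`
(machines `M1, M2, M3` are machines `0, 1, 2`):
all start times are nonnegative, on each machine the open processing intervals of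
distinct jobs are pairwise disjoint, for each job the open processing intervals on the
three machines are pairwise disjoint, and each flow-shop job goes through
`M1`, `M2`, `M3` in this order. -/
def Feasible {J : Type*} [DecidableEq J] (F O : Finset J) (p q : J → ℝ)
    (S : J → Fin 3 → ℝ) : Prop :=
  (∀ j ∈ F ∪ O, ∀ i : Fin 3, 0 ≤ S j i) ∧
  (∀ i : Fin 3, ∀ j ∈ F ∪ O, ∀ k ∈ F ∪ O, j ≠ k →
    S j i + jobTime F p q j ≤ S k i ∨ S k i + jobTime F p q k ≤ S j i) ∧
  (∀ j ∈ F ∪ O, ∀ i i' : Fin 3, i ≠ i' →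
    S j i + jobTime F p q j ≤ S j i' ∨ S j i' + jobTime F p q j ≤ S j i) ∧
  (∀ j ∈ F, S j 0 + p j ≤ S j 1 ∧ S j 1 + p j ≤ S j 2)

/-- Makespan: supremum of all completion times of the jobs of `F ∪ O`. -/
def makespan {J : Type*} [DecidableEq J] (F O : Finset J) (p q : J → ℝ)
    (S : J → Fin 3 → ℝ) : ℝ :=
  sSup {x : ℝ | ∃ j ∈ F ∪ O, ∃ i : Fin 3, x = S j i + jobTime F p q j}

section Intervals

variable {ι : Type*}

def NonOverlapping (a t : ι → ℝ) (i k : ι) : Prop :=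
  a i + t i ≤ a k ∨ a k + t k ≤ a i

theorem NonOverlapping.symm {a t : ι → ℝ} {i k : ι} (h : NonOverlapping a t i k) :
    NonOverlapping a t k i :=
  Or.symm h

variable [DecidableEq ι]

theorem exists_pairwise_nonOverlapping (s : Finset ι) (t : ι → ℝ) (ht : ∀ i ∈ s, 0 ≤ t i) :
    ∃ a : ι → ℝ, (∀ i ∈ s, 0 ≤ a i ∧ a i + t i ≤ ∑ k ∈ s, t k) ∧
      (s : Set ι).Pairwise (NonOverlapping a t) := by
  induction s using Finset.induction_on with
  | empty => exact ⟨0, by simp, by simp⟩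
  | insert j s hj ih =>
    obtain ⟨a, ha, hpair⟩ := ih fun i hi => ht i (mem_insert_of_mem hi)
    have hs : 0 ≤ ∑ k ∈ s, t k := sum_nonneg fun i hi => ht i (mem_insert_of_mem hi)
    have hne : ∀ i ∈ s, i ≠ j := fun i hi h => hj (h ▸ hi)
    refine ⟨Function.update a j (∑ k ∈ s, t k), ?_, ?_⟩
    · rw [sum_insert hj]
      intro i hi
      rcases mem_insert.1 hi with rfl | hi
      · simp [hs, add_comm]
      · simp only [Function.update_of_ne (hne i hi)]
        have := ht j (mem_insert_self j s)
        constructor <;> linarith [ha i hi]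
    · set a' := Function.update a j (∑ k ∈ s, t k)
      have hpair' : (s : Set ι).Pairwise (NonOverlapping a' t) := fun i hi k hk hik => by
        simpa [a', NonOverlapping, Function.update_of_ne (hne i hi),
          Function.update_of_ne (hne k hk)] using hpair hi hk hik
      rw [coe_insert]
      refine hpair'.insert_of_notMem (by simpa) fun i hi => ?_
      have hlast : NonOverlapping a' t i j := by
        left
        simpa [a', Function.update_of_ne (hne i hi)] using (ha i hi).2
      exact ⟨hlast.symm, hlast⟩

theorem sum_le_of_pairwise_nonOverlapping {a t : ι → ℝ} {T : ℝ} (s : Finset ι)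
    (ha : ∀ i ∈ s, 0 ≤ a i) (ht : ∀ i ∈ s, 0 ≤ t i)
    (hpair : (s : Set ι).Pairwise (NonOverlapping a t)) (hT : 0 ≤ T)
    (hend : ∀ i ∈ s, a i + t i ≤ T) : ∑ i ∈ s, t i ≤ T := by
  induction s using Finset.induction_on_max_value a generalizing T with
  | empty => simpa using hT
  | insert m s hm hmax ih =>
    have hpair_s : (s : Set ι).Pairwise (NonOverlapping a t) :=
      hpair.mono (coe_subset.2 (subset_insert m s))
    have hrest := fun {T'} => ih (fun i hi => ha i (mem_insert_of_mem hi))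
      (fun i hi => ht i (mem_insert_of_mem hi)) hpair_s (T := T')
    rw [sum_insert hm]
    rcases (ht m (mem_insert_self m s)).eq_or_lt with htm | htm
    · rw [← htm, zero_add]
      exact hrest hT fun i hi => hend i (mem_insert_of_mem hi)
    · -- `m` starts last, so every other interval ends before `a m`
      have hbefore : ∀ i ∈ s, a i + t i ≤ a m := by
        intro i hi
        have hne : i ≠ m := fun h => hm (h ▸ hi)
        refine (hpair (by simp [hi]) (by simp) hne).resolve_right fun h => ?_
        linarith [hmax i hi]
      linarith [hrest (ha m (mem_insert_self m s)) hbefore, hend m (mem_insert_self m s)]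

end Intervals

section Schedules

variable {J : Type*} [DecidableEq J] {F O : Finset J} {p q : J → ℝ} {S : J → Fin 3 → ℝ}

theorem jobTime_of_mem {j : J} (hj : j ∈ F) : jobTime F p q j = p j := if_pos hj

theorem jobTime_of_notMem {j : J} (hj : j ∉ F) : jobTime F p q j = q j := if_neg hj

theorem sum_jobTime_of_disjoint (h : Disjoint F O) :
    ∑ j ∈ F ∪ O, jobTime F p q j = ∑ j ∈ F, p j + ∑ j ∈ O, q j := by
  rw [sum_union h]
  congr 1
  · exact sum_congr rfl fun j hj => jobTime_of_mem hj
  · exact sum_congr rfl fun j hj => jobTime_of_notMem (disjoint_right.1 h hj)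

theorem le_makespan {j : J} (hj : j ∈ F ∪ O) (i : Fin 3) :
    S j i + jobTime F p q j ≤ makespan F O p q S := by
  refine le_csSup (Set.Finite.bddAbove ?_) ⟨j, hj, i, rfl⟩
  refine (((F ∪ O) ×ˢ (univ : Finset (Fin 3))).image
    fun x => S x.1 x.2 + jobTime F p q x.1).finite_toSet.subset ?_
  rintro x ⟨j, hj, i, rfl⟩
  exact mem_coe.2 (mem_image.2 ⟨(j, i), mem_product.2 ⟨hj, mem_univ i⟩, rfl⟩)

theorem makespan_le {T : ℝ} (hT : 0 ≤ T) (h : ∀ j ∈ F ∪ O, ∀ i, S j i + jobTime F p q j ≤ T) :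
    makespan F O p q S ≤ T :=
  Real.sSup_le (by rintro x ⟨j, hj, i, rfl⟩; exact h j hj i) hT

theorem Feasible.makespan_nonneg (hS : Feasible F O p q S)
    (ht : ∀ j ∈ F ∪ O, 0 ≤ jobTime F p q j) : 0 ≤ makespan F O p q S :=
  Real.sSup_nonneg (by rintro x ⟨j, hj, i, rfl⟩; exact add_nonneg (hS.1 j hj i) (ht j hj))

theorem Feasible.sum_jobTime_le_makespan (hS : Feasible F O p q S)
    (ht : ∀ j ∈ F ∪ O, 0 ≤ jobTime F p q j) (i : Fin 3) :
    ∑ j ∈ F ∪ O, jobTime F p q j ≤ makespan F O p q S :=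
  sum_le_of_pairwise_nonOverlapping _ (fun j hj => hS.1 j hj i) ht
    (fun j hj k hk hjk => hS.2.1 i j hj k hk hjk) (hS.makespan_nonneg ht)
    fun _ hj => le_makespan hj i

theorem Feasible.three_mul_jobTime_le_makespan (hS : Feasible F O p q S) {j : J}
    (hj : j ∈ F ∪ O) (ht : 0 ≤ jobTime F p q j) :
    3 * jobTime F p q j ≤ makespan F O p q S := by
  have hM : 0 ≤ makespan F O p q S := (add_nonneg (hS.1 j hj 0) ht).trans (le_makespan hj 0)
  simpa using sum_le_of_pairwise_nonOverlapping (a := S j) (t := fun _ => jobTime F p q j) univ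
    (fun i _ => hS.1 j hj i) (fun _ _ => ht) (fun i _ i' _ hii' => hS.2.2.1 j hj i i' hii') hM
    fun i _ => le_makespan hj i

def blockSchedule (F : Finset J) (a : J → ℝ) (Q P : ℝ) (j : J) : Fin 3 → ℝ :=
  if j ∈ F then fun i => a j + ![0, Q, 2 * Q] i else ![Q + P, 0, Q]

variable {jn : J} {a : J → ℝ} {P : ℝ}

theorem feasible_blockSchedule (hjn : jn ∉ F) (hq : 0 ≤ q jn) (hQP : q jn ≤ P)
    (hpq : ∀ j ∈ F, p j ≤ q jn) (ha : ∀ j ∈ F, 0 ≤ a j ∧ a j + p j ≤ P)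
    (hpair : (F : Set J).Pairwise (NonOverlapping a p)) :
    Feasible F {jn} p q (blockSchedule F a (q jn) P) := by
  have hF : ∀ j ∈ F, blockSchedule F a (q jn) P j = fun i => a j + ![0, q jn, 2 * q jn] i :=
    fun j hj => if_pos hj
  have hn : blockSchedule F a (q jn) P jn = ![q jn + P, 0, q jn] := if_neg hjn
  have hmem : ∀ j ∈ F ∪ {jn}, j ∈ F ∨ j = jn := fun j hj => by simpa using mem_union.1 hj
  refine ⟨?_, fun i => ?_, ?_, ?_⟩
  · intro j hj i
    rcases hmem j hj with hj | rfl
    · rw [hF j hj]; fin_cases i <;> simp <;> linarith [ha j hj, hpq j hj]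
    · rw [hn]; fin_cases i <;> simp <;> linarith
  · show ((F ∪ {jn} : Finset J) : Set J).Pairwise
      (NonOverlapping (blockSchedule F a (q jn) P · i) (jobTime F p q))
    rw [coe_union, coe_singleton, Set.union_singleton]
    refine Set.Pairwise.insert_of_notMem hjn (fun j hj k hk hjk => ?_) fun j hj => ?_
    · simp only [NonOverlapping, hF j hj, hF k hk, jobTime_of_mem hj, jobTime_of_mem hk]
      rcases hpair hj hk hjk with h | h
      · left; linarith
      · right; linarith
    · have hjF : j ∈ F := hj
      have hnj : NonOverlapping (blockSchedule F a (q jn) P · i) (jobTime F p q) jn j := by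
        simp only [NonOverlapping, hF j hjF, hn, jobTime_of_mem hjF, jobTime_of_notMem hjn]
        fin_cases i <;> simp <;> first | (left; linarith [ha j hjF]) | (right; linarith [ha j hjF])
      exact ⟨hnj, hnj.symm⟩
  · intro j hj i i' hii'
    rcases hmem j hj with hj | rfl
    · rw [hF j hj, jobTime_of_mem hj]
      fin_cases i <;> fin_cases i' <;> simp at hii' ⊢ <;>
        first | (left; linarith [hpq j hj]) | (right; linarith [hpq j hj])
    · rw [hn, jobTime_of_notMem hjn]
      fin_cases i <;> fin_cases i' <;> simp at hii' ⊢ <;>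
        first | (left; linarith) | (right; linarith)
  · intro j hj
    rw [hF j hj]
    constructor <;> simp <;> linarith [hpq j hj]

theorem makespan_blockSchedule_le (hjn : jn ∉ F) (hq : 0 ≤ q jn) (hQP : q jn ≤ P)
    (ha : ∀ j ∈ F, a j + p j ≤ P) :
    makespan F {jn} p q (blockSchedule F a (q jn) P) ≤ 2 * q jn + P := by
  refine makespan_le (by linarith) fun j hj i => ?_
  rcases mem_union.1 hj with hj | hj
  · rw [blockSchedule, if_pos hj, jobTime_of_mem hj]
    fin_cases i <;> simp <;> linarith [ha j hj]
  · rw [mem_singleton.1 hj, blockSchedule, if_neg hjn, jobTime_of_notMem hjn]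
    fin_cases i <;> simp <;> linarith

end Schedules

/-- Theorem 4.1, second case: if `O = {jn}` with `p_max < q_n` and `P(F) > q_n`, then
there is a feasible schedule of makespan at most `2 q_n + P(F)`, which is a
`4/3`-approximation. -/
theorem stmt10 {J : Type*} [DecidableEq J] (F : Finset J) (jn : J) (p q : J → ℝ)
    (hdisj : Disjoint F {jn})
    (hp : ∀ j ∈ F, 0 < p j) (hq : 0 < q jn)
    (hF : F.Nonempty)
    (hpq : F.sup' hF p < q jn) (hPF : q jn < ∑ j ∈ F, p j) :
    ∃ π : J → Fin 3 → ℝ, Feasible F {jn} p q π ∧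
      makespan F {jn} p q π ≤ 2 * q jn + (∑ j ∈ F, p j) ∧
      ∀ σ : J → Fin 3 → ℝ, Feasible F {jn} p q σ →
        makespan F {jn} p q π ≤ (4 / 3) * makespan F {jn} p q σ := by
  have hjn : jn ∉ F := disjoint_singleton_right.1 hdisj
  have hpq' : ∀ j ∈ F, p j ≤ q jn := fun j hj => ((F.le_sup' p hj).trans_lt hpq).le
  obtain ⟨a, ha, hpair⟩ := exists_pairwise_nonOverlapping F p fun j hj => (hp j hj).le
  have hmk := makespan_blockSchedule_le (q := q) hjn hq.le hPF.le fun j hj => (ha j hj).2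
  refine ⟨_, feasible_blockSchedule hjn hq.le hPF.le hpq' ha hpair, hmk, fun σ hσ => ?_⟩
  have ht : ∀ j ∈ F ∪ {jn}, 0 ≤ jobTime F p q j := by
    intro j hj
    rcases mem_union.1 hj with hj | hj
    · rw [jobTime_of_mem hj]; exact (hp j hj).le
    · rw [mem_singleton.1 hj, jobTime_of_notMem hjn]; exact hq.le
  have hthree := hσ.three_mul_jobTime_le_makespan (mem_union_right F (mem_singleton_self jn))
    (ht jn (mem_union_right F (mem_singleton_self jn)))
  have hload := hσ.sum_jobTime_le_makespan ht 2
  rw [jobTime_of_notMem hjn] at hthree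
  rw [sum_jobTime_of_disjoint hdisj, sum_singleton] at hload
  linarith
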